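/- If G is a graph of diameter 2, then the domination number of G is at most the minimum degree of G, i.e., γ(G) ≤ δ(G). -/

import Mathlib

/-!
The neighbourhood of a vertex `v` of minimum degree dominates: in diameter 2 every vertex other
than `v` and its neighbours has a common neighbour with `v`, and `v` itself has a neighbour.
-/

namespace SimpleGraph

variable {V : Type*} (G : SimpleGraph V)

def IsDominatingSet (D : Finset V) : Prop :=
  ∀ w : V, w ∈ D ∨ ∃ s ∈ D, G.Adj s w

noncomputable def dominationNumber : ℕ :=
  sInf {k : ℕ | ∃ D : Finset V, D.card = k ∧ G.IsDominatingSet D}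

variable {G}

theorem IsDominatingSet.dominationNumber_le_card {D : Finset V} (hD : G.IsDominatingSet D) :
    G.dominationNumber ≤ D.card :=
  Nat.sInf_le ⟨D, rfl, hD⟩

theorem exists_adj_adj_of_edist_le_two {u w : V} (h : G.edist u w ≤ 2) (hne : u ≠ w)
    (hnadj : ¬G.Adj u w) : ∃ s, G.Adj u s ∧ G.Adj s w := by
  have hcommon : G.commonNeighbors u w ≠ ∅ := fun hempty =>
    h.not_gt (two_lt_edist_iff.mpr ⟨hne, hnadj, hempty⟩)
  obtain ⟨s, hs⟩ := Set.nonempty_iff_ne_empty.mpr hcommon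
  rw [mem_commonNeighbors] at hs
  exact ⟨s, hs.1, hs.2.symm⟩

theorem isDominatingSet_neighborFinset [Nontrivial V] (h : G.ediam ≤ 2) (v : V)
    [Fintype (G.neighborSet v)] : G.IsDominatingSet (G.neighborFinset v) := by
  intro w
  simp only [mem_neighborFinset]
  by_cases hvw : v = w
  · subst hvw
    have hnotIsolated : ¬G.IsIsolated v :=
      (G.preconnected_of_ediam_ne_top (h.trans_lt (by decide)).ne).not_isIsolated v
    obtain ⟨s, hs⟩ := not_forall_not.mp hnotIsolated
    exact Or.inr ⟨s, hs, hs.symm⟩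
  by_cases hadj : G.Adj v w
  · exact Or.inl hadj
  · exact Or.inr (exists_adj_adj_of_edist_le_two (edist_le_ediam.trans h) hvw hadj)

end SimpleGraph

theorem dominationNumber_le_minDegree_general
    {V : Type*} [Fintype V] (G : SimpleGraph V) [DecidableRel G.Adj]
    (hdiam : G.diam = 2) :
    sInf {k : ℕ | ∃ D : Finset V, D.card = k ∧
        ∀ w : V, w ∈ D ∨ ∃ s ∈ D, G.Adj s w} ≤ G.minDegree := by
  have : Nontrivial V := G.nontrivial_of_diam_ne_zero (by omega)
  have hediam : G.ediam = 2 := by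
    rw [← ENat.natCast_toNat (G.ediam_ne_top_of_diam_ne_zero (by omega))]
    exact congrArg _ hdiam
  obtain ⟨v, hv⟩ := G.exists_minimal_degree_vertex
  rw [hv, ← G.card_neighborFinset_eq_degree]
  exact (SimpleGraph.isDominatingSet_neighborFinset hediam.le v).dominationNumber_le_card

/-- If `G` is a (connected) graph of diameter 2, then the domination number of `G` is at most
its minimum degree: `γ(G) ≤ δ(G)`. -/
theorem dominationNumber_le_minDegree
    {V : Type*} [Fintype V] [DecidableEq V] (G : SimpleGraph V) [DecidableRel G.Adj]
    (hconn : G.Connected) (hdiam : G.diam = 2) :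
    sInf {k : ℕ | ∃ D : Finset V, D.card = k ∧
        ∀ w : V, w ∈ D ∨ ∃ s ∈ D, G.Adj s w} ≤ G.minDegree :=
  dominationNumber_le_minDegree_general G hdiam
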